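/- arXiv:2501.00102 — 8 statements merged into one kernel-verified Lean document; each statement's English description precedes it below -/
import Mathlib

section
/- Let D be a finite digraph on n ≥ 4 vertices with δ⁻(D) + δ⁺(D) ≥ n. Then D has diameter at most 2, and for every vertex v, the vertex-deleted subdigraph D − v also has diameter at most 2. -/
/-! If `u ≠ u'` are not joined by a path of length at most 2, then `u ↛ u'` and the
out-neighbourhood of `u` and the in-neighbourhood of `u'` are disjoint subsets of `V ∖ {u, u'}`,
so `δ⁺ + δ⁻ ≤ n - 2`. Deleting a vertex lowers `n` by one and each of the two degrees by at most one,
so the same count applies to `D - v`. -/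

/-- A directed walk of length `n` from `u` to `v` along the arc relation `A`. -/
def DWalk {V : Type*} (A : V → V → Prop) : ℕ → V → V → Prop
  | 0, u, v => u = v
  | n+1, u, v => ∃ w, A u w ∧ DWalk A n w v

/-- Directed distance: length of a shortest directed path (`⊤` if none exists). -/
noncomputable def ddist {V : Type*} (A : V → V → Prop) (u v : V) : ℕ∞ :=
  sInf {k : ℕ∞ | ∃ n : ℕ, k = n ∧ DWalk A n u v}

/-- The induced subdigraph obtained by deleting vertex `v`. -/
def delRel {V : Type*} (A : V → V → Prop) (v : V) :
    {x : V // x ≠ v} → {x : V // x ≠ v} → Prop :=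
  fun a b => A a.1 b.1

noncomputable def outDeg {V : Type*} (A : V → V → Prop) (u : V) : ℕ := Nat.card {w : V // A u w}
noncomputable def inDeg {V : Type*} (A : V → V → Prop) (u : V) : ℕ := Nat.card {w : V // A w u}
noncomputable def minOutDeg {V : Type*} (A : V → V → Prop) : ℕ := sInf (Set.range (outDeg A))
noncomputable def minInDeg {V : Type*} (A : V → V → Prop) : ℕ := sInf (Set.range (inDeg A))

lemma ddist_le_of_dWalk {V : Type*} {A : V → V → Prop} {n : ℕ} {u v : V}
    (h : DWalk A n u v) : ddist A u v ≤ n :=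
  sInf_le ⟨n, rfl, h⟩

lemma minOutDeg_le_outDeg {V : Type*} (A : V → V → Prop) (u : V) : minOutDeg A ≤ outDeg A u :=
  Nat.sInf_le ⟨u, rfl⟩

lemma minInDeg_le_inDeg {V : Type*} (A : V → V → Prop) (u : V) : minInDeg A ≤ inDeg A u :=
  Nat.sInf_le ⟨u, rfl⟩

lemma ddist_le_two_of_card_lt {V : Type*} [Finite V] {A : V → V → Prop} (hirr : ∀ x, ¬ A x x)
    {u u' : V} (hne : u ≠ u') (hcard : Nat.card V < outDeg A u + inDeg A u' + 2) :
    ddist A u u' ≤ 2 := by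
  by_cases hadj : A u u'
  · exact (ddist_le_of_dWalk (n := 1) ⟨u', hadj, rfl⟩).trans (by norm_num)
  by_contra hfar
  have hdisj : Disjoint {w | A u w} {w | A w u'} :=
    Set.disjoint_left.2 fun w hw hw' => hfar (ddist_le_of_dWalk (n := 2) ⟨w, hw, u', hw', rfl⟩)
  have hsub : {w | A u w} ∪ {w | A w u'} ⊆ ({u, u'} : Set V)ᶜ := by
    rintro w (hw | hw) (rfl | rfl)
    exacts [hirr _ hw, hadj hw, hadj hw, hirr _ hw]
  have hle := Set.ncard_le_ncard hsub
  have hcompl := Set.ncard_add_ncard_compl ({u, u'} : Set V)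
  rw [Set.ncard_union_eq hdisj] at hle
  rw [Set.ncard_pair hne] at hcompl
  have hout : outDeg A u = {w | A u w}.ncard := Nat.card_coe_set_eq _
  have hin : inDeg A u' = {w | A w u'}.ncard := Nat.card_coe_set_eq _
  omega

lemma card_subtype_ne_add_one {V : Type*} [Finite V] (v : V) :
    Nat.card {x // x ≠ v} + 1 = Nat.card V := by
  have h := Set.ncard_add_ncard_compl ({v} : Set V)
  rw [Set.ncard_singleton] at h
  rw [← h, add_comm]
  rfl

lemma card_subtype_le_card_subtype_ne_add_one {V : Type*} (P : V → Prop) (v : V) :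
    Nat.card {w // P w} ≤ Nat.card {w : {x // x ≠ v} // P w} + 1 := by
  rw [Nat.card_congr (Equiv.subtypeSubtypeEquivSubtypeInter (· ≠ v) P)]
  have h := Set.pred_ncard_le_ncard_sdiff_singleton {w | P w} v
  rw [← Nat.card_coe_set_eq, ← Nat.card_coe_set_eq] at h
  have h2 : Nat.card {w // w ≠ v ∧ P w} = Nat.card ↥({w | P w} \ {v}) :=
    Nat.card_congr (Equiv.subtypeEquivRight fun w => and_comm)
  change Nat.card {w // P w} - 1 ≤ _ at h
  omega

lemma outDeg_le_outDeg_delRel_add_one {V : Type*} (A : V → V → Prop) {v : V}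
    (u : {x // x ≠ v}) : outDeg A u ≤ outDeg (delRel A v) u + 1 :=
  card_subtype_le_card_subtype_ne_add_one (A u) v

lemma inDeg_le_inDeg_delRel_add_one {V : Type*} (A : V → V → Prop) {v : V}
    (u : {x // x ≠ v}) : inDeg A u ≤ inDeg (delRel A v) u + 1 :=
  card_subtype_le_card_subtype_ne_add_one (A · u) v

theorem stmt1_general {V : Type*} [Fintype V] (A : V → V → Prop) (hirr : Irreflexive A)
    (hdeg : Fintype.card V ≤ minInDeg A + minOutDeg A) :
    (∀ u u' : V, u ≠ u' → ddist A u u' ≤ 2) ∧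
    (∀ v : V, ∀ u u' : {x : V // x ≠ v}, u ≠ u' → ddist (delRel A v) u u' ≤ 2) := by
  have hdeg' (u u' : V) : Nat.card V ≤ outDeg A u + inDeg A u' := by
    rw [Nat.card_eq_fintype_card]
    linarith [minOutDeg_le_outDeg A u, minInDeg_le_inDeg A u']
  refine ⟨fun u u' hne => ddist_le_two_of_card_lt hirr hne (by linarith [hdeg' u u']),
    fun v u u' hne => ddist_le_two_of_card_lt (fun x => hirr x.1) hne ?_⟩
  linarith [hdeg' u u', card_subtype_ne_add_one v, outDeg_le_outDeg_delRel_add_one A u,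
    inDeg_le_inDeg_delRel_add_one A u']

theorem stmt1 {V : Type*} [Fintype V] (A : V → V → Prop) (hirr : Irreflexive A)
    (hn : 4 ≤ Fintype.card V)
    (hdeg : Fintype.card V ≤ minInDeg A + minOutDeg A) :
    (∀ u u' : V, u ≠ u' → ddist A u u' ≤ 2) ∧
    (∀ v : V, ∀ u u' : {x : V // x ≠ v}, u ≠ u' → ddist (delRel A v) u u' ≤ 2) :=
  stmt1_general A hirr hdeg
end

section
/- Let D be a finite strongly connected digraph on n ≥ 4 vertices with δ⁻(D) + δ⁺(D) ≥ n, and let v be any vertex. Then W(D) − W(D − v) > 0, where W denotes the total distance (Wiener index) of a digraph. -/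
/-- Strong connectivity. -/
def StrongConn {V : Type*} (A : V → V → Prop) : Prop := ∀ u v, ∃ n, DWalk A n u v

/-- Total distance (Wiener index): sum of distances over ordered pairs
(the diagonal contributes `0`). -/
noncomputable def wiener {V : Type*} [Fintype V] (A : V → V → Prop) : ℕ∞ :=
  ∑ u, ∑ w, ddist A u w

open Finset

private lemma dwalk_ddist_le {V : Type*} {A : V → V → Prop} {n : ℕ} {u w : V}
    (h : DWalk A n u w) : ddist A u w ≤ n :=
  sInf_le ⟨n, rfl, h⟩

private lemma one_le_ddist {V : Type*} {A : V → V → Prop} {u w : V} (h : u ≠ w) :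
    1 ≤ ddist A u w := by
  refine le_sInf ?_
  rintro k ⟨n, rfl, hw⟩
  cases n with
  | zero => exact absurd hw h
  | succ m => exact_mod_cast Nat.succ_le_succ (Nat.zero_le m)

private lemma two_le_ddist {V : Type*} {A : V → V → Prop} {u w : V} (h : u ≠ w)
    (hA : ¬ A u w) : 2 ≤ ddist A u w := by
  refine le_sInf ?_
  rintro k ⟨n, rfl, hw⟩
  match n, hw with
  | 0, hw => exact absurd hw h
  | 1, ⟨z, hz, hz0⟩ => exact absurd (show A u w by rwa [hz0] at hz) hA
  | (m+2), _ => exact_mod_cast Nat.succ_le_succ (Nat.succ_le_succ (Nat.zero_le m))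

private lemma ddist_self {V : Type*} (A : V → V → Prop) (u : V) : ddist A u u = 0 :=
  le_antisymm (by simpa using dwalk_ddist_le (show DWalk A 0 u u from rfl)) (zero_le)

private lemma ddist_del_le_two {V : Type*} [Fintype V] [DecidableEq V] {A : V → V → Prop}
    (hirr : Irreflexive A) (hn : 4 ≤ Fintype.card V)
    (hdeg : Fintype.card V ≤ minInDeg A + minOutDeg A)
    {v : V} (u w : {x : V // x ≠ v}) (huw : u ≠ w) :
    ddist (delRel A v) u w ≤ 2 := by
  classical
  by_cases hA : A u.1 w.1
  · refine le_trans (dwalk_ddist_le (show DWalk (delRel A v) 1 u w from ⟨w, hA, rfl⟩)) ?_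
    exact_mod_cast one_le_two
  · have huw1 : u.1 ≠ w.1 := fun h => huw (Subtype.ext h)
    set S1 : Finset V := univ.filter (fun z => A u.1 z ∧ z ≠ v) with hS1
    set S2 : Finset V := univ.filter (fun z => A z w.1 ∧ z ≠ v) with hS2
    obtain ⟨z, hz⟩ : (S1 ∩ S2).Nonempty := by
      by_contra hemp
      have hdisj : Disjoint S1 S2 := by
        rw [Finset.not_nonempty_iff_eq_empty] at hemp
        exact Finset.disjoint_iff_inter_eq_empty.mpr hemp
      have hsub : S1 ∪ S2 ⊆ univ \ {u.1, w.1, v} := by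
        intro z hz
        simp only [hS1, hS2, Finset.mem_union, Finset.mem_filter, Finset.mem_univ,
          true_and] at hz
        simp only [Finset.mem_sdiff, Finset.mem_univ, true_and, Finset.mem_insert,
          Finset.mem_singleton]
        push_neg
        rcases hz with ⟨h1, h2⟩ | ⟨h1, h2⟩
        · exact ⟨fun e => hirr u.1 (e ▸ h1), fun e => hA (e ▸ h1), h2⟩
        · exact ⟨fun e => hA (e ▸ h1), fun e => hirr w.1 (e ▸ h1), h2⟩
      have hcard3 : ({u.1, w.1, v} : Finset V).card = 3 := by
        rw [Finset.card_insert_of_notMem (by simp [huw1, u.2]),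
          Finset.card_insert_of_notMem (by simp [w.2]), Finset.card_singleton]
      have hcardU : (univ \ ({u.1, w.1, v} : Finset V)).card = Fintype.card V - 3 := by
        rw [Finset.card_sdiff_of_subset (Finset.subset_univ _), Finset.card_univ, hcard3]
      have hle : S1.card + S2.card ≤ Fintype.card V - 3 := by
        rw [← Finset.card_union_of_disjoint hdisj, ← hcardU]
        exact Finset.card_le_card hsub
      -- degree lower bounds
      have h1 : minOutDeg A ≤ S1.card + 1 := by
        refine le_trans (Nat.sInf_le ⟨u.1, rfl⟩) ?_
        have hod : outDeg A u.1 = (univ.filter (fun z => A u.1 z)).card := by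
          rw [outDeg, Nat.card_eq_fintype_card, Fintype.card_subtype]
        rw [hod]
        refine le_trans (Finset.card_le_card (show (univ.filter (fun z => A u.1 z)) ⊆ insert v S1 by
          intro z hz
          simp only [Finset.mem_filter, Finset.mem_univ, true_and] at hz
          by_cases hzv : z = v
          · simp [hzv]
          · simp [hS1, hz, hzv])) ?_
        exact Finset.card_insert_le _ _
      have h2 : minInDeg A ≤ S2.card + 1 := by
        refine le_trans (Nat.sInf_le ⟨w.1, rfl⟩) ?_
        have hod : inDeg A w.1 = (univ.filter (fun z => A z w.1)).card := by
          rw [inDeg, Nat.card_eq_fintype_card, Fintype.card_subtype]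
        rw [hod]
        refine le_trans (Finset.card_le_card (show (univ.filter (fun z => A z w.1)) ⊆ insert v S2 by
          intro z hz
          simp only [Finset.mem_filter, Finset.mem_univ, true_and] at hz
          by_cases hzv : z = v
          · simp [hzv]
          · simp [hS2, hz, hzv])) ?_
        exact Finset.card_insert_le _ _
      omega
    simp only [Finset.mem_inter, hS1, hS2, Finset.mem_filter, Finset.mem_univ, true_and] at hz
    obtain ⟨⟨h1, hzv⟩, h2, -⟩ := hz
    exact dwalk_ddist_le (show DWalk (delRel A v) 2 u w from ⟨⟨z, hzv⟩, h1, w, h2, rfl⟩)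

private lemma ddist_del_le {V : Type*} [Fintype V] [DecidableEq V] {A : V → V → Prop}
    (hirr : Irreflexive A) (hn : 4 ≤ Fintype.card V)
    (hdeg : Fintype.card V ≤ minInDeg A + minOutDeg A)
    {v : V} (u w : {x : V // x ≠ v}) :
    ddist (delRel A v) u w ≤ ddist A u.1 w.1 := by
  by_cases huw : u = w
  · subst huw
    simp [ddist_self]
  · by_cases hA : A u.1 w.1
    · exact le_trans
        (by simpa using dwalk_ddist_le (show DWalk (delRel A v) 1 u w from ⟨w, hA, rfl⟩))
        (one_le_ddist (fun h => huw (Subtype.ext h)))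
    · exact le_trans (ddist_del_le_two hirr hn hdeg u w huw)
        (two_le_ddist (fun h => huw (Subtype.ext h)) hA)

private lemma enat_lt_add_right {a b : ℕ∞} (h : a ≠ ⊤) (h2 : b ≠ 0) : a < a + b := by
  rcases a with _ | a
  · exact absurd rfl h
  rcases b with _ | b
  · show (a:ℕ∞) < (a:ℕ∞) + ⊤
    rw [add_top]
    exact ENat.coe_lt_top a
  · have hb : 1 ≤ b := Nat.one_le_iff_ne_zero.mpr (fun hb0 => h2 (by simp [hb0]; rfl))
    calc ((a : ℕ∞)) < ((a + 1 : ℕ) : ℕ∞) := by exact_mod_cast Nat.lt_succ_self a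
    _ ≤ (a : ℕ∞) + b := by
        rw [Nat.cast_add, Nat.cast_one]
        exact add_le_add_right (by exact_mod_cast hb) _

theorem stmt2 {V : Type*} [Fintype V] [DecidableEq V] (A : V → V → Prop) (hirr : Irreflexive A)
    (hconn : StrongConn A)
    (hn : 4 ≤ Fintype.card V)
    (hdeg : Fintype.card V ≤ minInDeg A + minOutDeg A)
    (v : V) :
    wiener (delRel A v) < wiener A := by
  classical
  have hfin : ∀ u w : V, ddist A u w ≠ ⊤ := by
    intro u w
    obtain ⟨n, hwalk⟩ := hconn u w
    exact ne_top_of_le_ne_top (WithTop.natCast_ne_top n) (dwalk_ddist_le hwalk)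
  have hmem : ∀ x : V, x ∈ univ.erase v ↔ x ≠ v := by simp
  -- the sum over pairs avoiding v
  set S : ℕ∞ := ∑ u ∈ univ.erase v, ∑ w ∈ univ.erase v, ddist A u w with hS
  have hSfin : S ≠ ⊤ := by
    rw [hS]
    refine (WithTop.sum_lt_top.mpr fun u _ => ?_).ne
    exact WithTop.sum_lt_top.mpr fun w _ => lt_top_iff_ne_top.mpr (hfin u w)
  -- wiener of the deleted digraph is at most S
  have hdelS : wiener (delRel A v) ≤ S := by
    have hEq : S = ∑ u : {x : V // x ≠ v}, ∑ w : {x : V // x ≠ v}, ddist A u.1 w.1 := by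
      rw [hS, Finset.sum_subtype _ hmem (fun u => ∑ w ∈ univ.erase v, ddist A u w)]
      exact Finset.sum_congr rfl fun u _ => Finset.sum_subtype _ hmem _
    rw [hEq, wiener]
    exact Finset.sum_le_sum fun u _ => Finset.sum_le_sum fun w _ => ddist_del_le hirr hn hdeg u w
  -- decompose wiener A
  have hdecomp : wiener A =
      (∑ u ∈ univ.erase v, (∑ w ∈ univ.erase v, ddist A u w + ddist A u v)) +
        ∑ w, ddist A v w := by
    rw [wiener, ← Finset.sum_erase_add univ _ (Finset.mem_univ v)]
    congr 1
    refine Finset.sum_congr rfl fun u _ => ?_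
    rw [← Finset.sum_erase_add univ _ (Finset.mem_univ v)]
  have hSle : S ≤ ∑ u ∈ univ.erase v, (∑ w ∈ univ.erase v, ddist A u w + ddist A u v) := by
    rw [hS]
    exact Finset.sum_le_sum fun u _ => le_add_of_nonneg_right (zero_le)
  -- the row of v is positive
  obtain ⟨w0, hw0⟩ : ∃ w0 : V, w0 ≠ v := by
    have : 1 < Fintype.card V := by omega
    exact Fintype.exists_ne_of_one_lt_card this v
  have hrow : (∑ w, ddist A v w) ≠ 0 := by
    intro h0
    have h1 : ddist A v w0 ≤ ∑ w, ddist A v w :=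
      Finset.single_le_sum (fun w _ => zero_le) (Finset.mem_univ w0)
    rw [h0] at h1
    have := one_le_ddist (A := A) (Ne.symm hw0)
    exact absurd (le_trans this h1) (by norm_num)
  calc wiener (delRel A v) ≤ S := hdelS
    _ < S + ∑ w, ddist A v w := enat_lt_add_right hSfin hrow
    _ ≤ (∑ u ∈ univ.erase v, (∑ w ∈ univ.erase v, ddist A u w + ddist A u v)) +
        ∑ w, ddist A v w := add_le_add_left hSle _
    _ = wiener A := hdecomp.symm
end

section
/- In the circulant digraph D(n, [m]) with vertex set ℤ/nℤ, arcs i → i−1 and i → i+k for 1 ≤ k ≤ m (where 1 ≤ m ≤ n−2), the directed distance from vertex 0 to vertex x (with 0 ≤ x < n, representing the residue class) equals min(⌈x/m⌉, n − x). -/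
/-- The arc relation of the circulant digraph `D(n,S)`: arc from `i` to `j` iff
`j - i ≡ -1 (mod n)` or `j - i ≡ k (mod n)` for some `k ∈ S`. -/
def circArc (n : ℕ) (S : Set ℕ) : ZMod n → ZMod n → Prop :=
  fun i j => j - i = -1 ∨ ∃ k ∈ S, j - i = (k : ZMod n)

/-!
Every arc changes the vertex by `-1` or by some `k ∈ [1, m]`, so a walk of length `L` with `a`
forward arcs displaces `0` by an integer `s` with `-(L - a) ≤ s ≤ m a`. If `L < ⌈x/m⌉` then
`s < x`, and if `L < n - x` then `s > x - n`; both together rule out `s ≡ x (mod n)`.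
Conversely `⌈x/m⌉` forward arcs or `n - x` backward arcs reach `x`.
-/

theorem ddist_eq_of_dwalk {V : Type*} {A : V → V → Prop} {u v : V} {d : ℕ}
    (hwalk : DWalk A d u v) (hmin : ∀ L, DWalk A L u v → d ≤ L) : ddist A u v = d :=
  le_antisymm (sInf_le ⟨d, rfl, hwalk⟩)
    (le_sInf <| by rintro _ ⟨L, rfl, hL⟩; exact_mod_cast hmin L hL)

section Circulant

variable {n : ℕ}

theorem circArc_dwalk_sub (S : Set ℕ) (j : ℕ) (u : ZMod n) :
    DWalk (circArc n S) j u (u - j) := by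
  induction j generalizing u with
  | zero => simp [DWalk]
  | succ j ih =>
    refine ⟨u - 1, Or.inl (by ring), ?_⟩
    convert ih (u - 1) using 1
    push_cast
    ring

theorem circArc_Icc_dwalk_add {m j x : ℕ} (hjx : j ≤ x) (hxm : x ≤ m * j) (u : ZMod n) :
    DWalk (circArc n (Set.Icc 1 m)) j u (u + x) := by
  induction j generalizing x u with
  | zero =>
    obtain rfl : x = 0 := by omega
    simp [DWalk]
  | succ j ih =>
    have hm : 1 ≤ m := Nat.pos_of_ne_zero (by rintro rfl; omega)
    have hj : j ≤ m * j := Nat.le_mul_of_pos_left j hm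
    rw [Nat.mul_succ] at hxm
    -- first arc: as long a jump as the remaining `j` arcs still allow
    set k := min m (x - j)
    refine ⟨u + k, Or.inr ⟨k, ⟨by omega, min_le_left _ _⟩, by ring⟩, ?_⟩
    convert ih (x := x - k) (by omega) (by omega) (u + k) using 1
    rw [Nat.cast_sub (by omega)]
    ring

theorem circArc_dwalk_displacement {S : Set ℕ} {m : ℕ} (hS : ∀ k ∈ S, k ≤ m) {L : ℕ}
    {u v : ZMod n} (h : DWalk (circArc n S) L u v) :
    ∃ a b : ℕ, a + b = L ∧ ∃ s : ℤ, -(b : ℤ) ≤ s ∧ s ≤ m * a ∧ v = u + s := by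
  induction L generalizing u with
  | zero => exact ⟨0, 0, rfl, 0, le_rfl, by simp, by simpa using h.symm⟩
  | succ L ih =>
    obtain ⟨w, harc, hw⟩ := h
    obtain ⟨a, b, rfl, s, hbs, hsa, rfl⟩ := ih hw
    rcases harc with hback | ⟨k, hk, hfwd⟩
    · refine ⟨a, b + 1, by omega, s - 1, by push_cast; omega, by omega, ?_⟩
      rw [eq_add_of_sub_eq hback]
      push_cast
      ring
    · have hkm : (k : ℤ) ≤ m := by exact_mod_cast hS k hk
      refine ⟨a + 1, b, by omega, s + k, by omega, by push_cast; linarith, ?_⟩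
      rw [eq_add_of_sub_eq hfwd]
      push_cast
      ring

theorem le_of_circArc_Icc_dwalk {m x L : ℕ} (hm : 0 < m) (hx : x < n)
    (h : DWalk (circArc n (Set.Icc 1 m)) L 0 x) : min (x ⌈/⌉ m) (n - x) ≤ L := by
  obtain ⟨a, b, rfl, s, hbs, hsa, hsx⟩ := circArc_dwalk_displacement (fun k hk => hk.2) h
  by_contra! hlt
  have hma : m * a < x := calc
    m * a ≤ m * (a + b) := Nat.mul_le_mul_left m (Nat.le_add_right a b)
    _ < x := not_le.1 fun hle => by
      have := (ceilDiv_le_iff_le_mul hm).2 hle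
      omega
  have hs_lt : s < x := lt_of_le_of_lt hsa (by exact_mod_cast hma)
  have hs_gt : (x : ℤ) - n < s := by omega
  have hdvd : (n : ℤ) ∣ s - x :=
    (ZMod.intCast_eq_intCast_iff_dvd_sub _ _ _).1 (by simpa using hsx)
  have hs_eq : s - x = 0 := Int.eq_zero_of_abs_lt_dvd hdvd (abs_lt.2 ⟨by omega, by omega⟩)
  omega

end Circulant

theorem stmt7_general (n m : ℕ) (hm : 1 ≤ m) (x : ℕ) (hx : x < n) :
    ddist (circArc n (Set.Icc 1 m)) 0 (x : ZMod n) =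
      (min ((x + m - 1) / m) (n - x) : ℕ) := by
  rw [← Nat.ceilDiv_eq_add_pred_div]
  refine ddist_eq_of_dwalk ?_ fun L hL => le_of_circArc_Icc_dwalk hm hx hL
  rcases le_total (x ⌈/⌉ m) (n - x) with hq | hq
  · rw [min_eq_left hq]
    have hqx : x ⌈/⌉ m ≤ x := (ceilDiv_le_iff_le_mul hm).2 (Nat.le_mul_of_pos_left x hm)
    simpa using circArc_Icc_dwalk_add hqx ((ceilDiv_le_iff_le_mul hm).1 le_rfl) (0 : ZMod n)
  · rw [min_eq_right hq]
    simpa [Nat.cast_sub hx.le] using circArc_dwalk_sub (Set.Icc 1 m) (n - x) (0 : ZMod n)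

theorem stmt7 (n m : ℕ) (hm : 1 ≤ m) (hmn : m ≤ n - 2) (x : ℕ) (hx : x < n) :
    ddist (circArc n (Set.Icc 1 m)) 0 (x : ZMod n) =
      (min ((x + m - 1) / m) (n - x) : ℕ) :=
  stmt7_general n m hm x hx
end

section
/- Let 1 ≤ m, let a ≥ 1 and 0 ≤ r ≤ m, and set n = a(m+1) + 1 + r. In the circulant digraph D(n,[m]) (arcs i → i−1 and i → i+k for k ∈ {1,…,m}, modulo n), the out-transmission of every vertex v satisfies σ⁺(v) = (m+1)·C(a+1, 2) + r(a+1), where C(a+1,2) = (a+1)a/2, and the in-transmission σ⁻(v) equals the same value. -/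
/-!
A walk of length `k` in `D(n,[m])` moves by an integer displacement in `[-k, m k]`, and every
such displacement is realised. Hence `d(u, w) = min (⌈t / m⌉, n - t)` where `t ∈ [0, n)` represents
`w - u`: either go forward in steps of at most `m`, or backward in steps of `1`. Since this depends
only on `w - u`, both transmissions equal `∑_{t < n} min (⌈t / m⌉, n - t)`. For
`n = a (m + 1) + 1 + r` the minimum is `⌈t / m⌉` for `t ≤ m a + r` and `n - t` afterwards; the first
part sums to `m C(a+1, 2) + r (a + 1)` block by block, the second to `C(a+1, 2)`.
-/

section DirectedDistance

variable {V : Type*} {A : V → V → Prop} {u v : V}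

lemma ddist_le_of_dwalk {k : ℕ} (h : DWalk A k u v) : ddist A u v ≤ k :=
  sInf_le ⟨k, rfl, h⟩

lemma le_ddist_of_forall_dwalk {d : ℕ} (h : ∀ k, DWalk A k u v → d ≤ k) :
    (d : ℕ∞) ≤ ddist A u v :=
  le_sInf <| by
    rintro _ ⟨k, rfl, hk⟩
    exact_mod_cast h k hk

end DirectedDistance

section Circulant

variable {n m : ℕ}

lemma dwalk_circArc_sub (S : Set ℕ) (k : ℕ) (u : ZMod n) :
    DWalk (circArc n S) k u (u - k) := by
  induction k generalizing u with
  | zero => simp [DWalk]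
  | succ k ih =>
    refine ⟨u - 1, Or.inl (by ring), ?_⟩
    convert ih (u - 1) using 1
    push_cast
    ring

lemma dwalk_circArc_Icc_add {k t : ℕ} (hkt : k ≤ t) (htk : t ≤ m * k) (u : ZMod n) :
    DWalk (circArc n (Set.Icc 1 m)) k u (u + t) := by
  induction k generalizing t u with
  | zero =>
    obtain rfl : t = 0 := by omega
    simp [DWalk]
  | succ k ih =>
    have hmk : m * (k + 1) = m * k + m := by ring
    have hm : 0 < m := Nat.pos_of_ne_zero (by rintro rfl; omega)
    have hk : k ≤ m * k := Nat.le_mul_of_pos_left k hm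
    obtain ⟨s, hs₁, hsm, hst, hks, hsk⟩ :
        ∃ s, 1 ≤ s ∧ s ≤ m ∧ s ≤ t ∧ k ≤ t - s ∧ t - s ≤ m * k :=
      ⟨min m (t - k), by omega, by omega, by omega, by omega, by omega⟩
    refine ⟨u + s, Or.inr ⟨s, ⟨hs₁, hsm⟩, by ring⟩, ?_⟩
    convert ih hks hsk (u + s) using 1
    push_cast [Nat.cast_sub hst]
    ring

lemma exists_int_of_dwalk_circArc {S : Set ℕ} (hS : ∀ s ∈ S, s ≤ m) {k : ℕ} {u w : ZMod n}
    (h : DWalk (circArc n S) k u w) :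
    ∃ z : ℤ, -k ≤ z ∧ z ≤ m * k ∧ w - u = z := by
  induction k generalizing u with
  | zero => exact ⟨0, le_rfl, by simp, by simp [show u = w from h]⟩
  | succ k ih =>
    obtain ⟨x, hux, hxw⟩ := h
    obtain ⟨z, hz₁, hz₂, hz⟩ := ih hxw
    have hw : w - u = (x - u) + (w - x) := by ring
    rcases hux with hux | ⟨s, hs, hux⟩
    · refine ⟨z - 1, by push_cast; omega, by push_cast; nlinarith, ?_⟩
      rw [hw, hux, hz]
      push_cast
      ring
    · have hsm : (s : ℤ) ≤ m := by exact_mod_cast hS s hs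
      refine ⟨z + s, by push_cast; omega, by push_cast; nlinarith, ?_⟩
      rw [hw, hux, hz]
      push_cast
      ring

lemma le_or_le_sub_of_intCast_eq_natCast {z : ℤ} {t : ℕ}
    (h : (z : ZMod n) = (t : ZMod n)) : (t : ℤ) ≤ z ∨ z ≤ t - n := by
  obtain ⟨j, hj⟩ := (ZMod.intCast_eq_intCast_iff_dvd_sub z t n).1 (by exact_mod_cast h)
  rcases le_or_gt j 0 with hj₀ | hj₀
  · left; nlinarith
  · right; nlinarith

theorem ddist_circArc_Icc [NeZero n] (hm : 1 ≤ m) (u w : ZMod n) :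
    ddist (circArc n (Set.Icc 1 m)) u w =
      (min ((w - u).val ⌈/⌉ m) (n - (w - u).val) : ℕ) := by
  set t := (w - u).val
  have ht : t < n := ZMod.val_lt _
  have hwu : w = u + t := by simp [t]
  apply le_antisymm
  · rw [Nat.mono_cast.map_min]
    refine le_min (ddist_le_of_dwalk ?_) (ddist_le_of_dwalk ?_)
    · rw [hwu]
      refine dwalk_circArc_Icc_add ?_ ((ceilDiv_le_iff_le_mul hm).1 le_rfl) u
      exact (ceilDiv_le_iff_le_mul hm).2 (Nat.le_mul_of_pos_left t hm)
    · convert dwalk_circArc_sub _ (n - t) u using 1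
      simp [hwu, Nat.cast_sub ht.le]
  · refine le_ddist_of_forall_dwalk fun k hk => ?_
    obtain ⟨z, hz₁, hz₂, hz⟩ := exists_int_of_dwalk_circArc (fun s hs => hs.2) hk
    have hzt : (z : ZMod n) = (t : ZMod n) := by rw [← hz]; simp [t]
    rcases le_or_le_sub_of_intCast_eq_natCast hzt with h | h
    · exact min_le_of_left_le ((ceilDiv_le_iff_le_mul hm).2 (by exact_mod_cast h.trans hz₂))
    · exact min_le_of_right_le (by omega)

end Circulant

section Sums

open Finset

variable {m : ℕ}

lemma ceilDiv_eq_add_one (hm : 0 < m) {k t : ℕ} (hlt : m * k < t) (hle : t ≤ m * (k + 1)) :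
    t ⌈/⌉ m = k + 1 :=
  le_antisymm ((ceilDiv_le_iff_le_mul hm).2 hle)
    (lt_of_not_ge fun h => (not_le.2 hlt) ((ceilDiv_le_iff_le_mul hm).1 h))

lemma sum_range_ceilDiv_add (hm : 0 < m) {r : ℕ} (hr : r ≤ m) (a : ℕ) :
    ∑ t ∈ range (m * a + 1 + r), t ⌈/⌉ m = ∑ t ∈ range (m * a + 1), t ⌈/⌉ m + r * (a + 1) := by
  have hval : ∀ x ∈ range r, (m * a + 1 + x) ⌈/⌉ m = a + 1 := fun x hx =>
    ceilDiv_eq_add_one hm (by omega) (by linarith [mem_range.1 hx, mul_add m a 1])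
  rw [sum_range_add, sum_const_nat hval, card_range]

lemma sum_range_mul_add_one_ceilDiv (hm : 0 < m) (a : ℕ) :
    ∑ t ∈ range (m * a + 1), t ⌈/⌉ m = m * (a + 1).choose 2 := by
  induction a with
  | zero => simp
  | succ a ih =>
    rw [show m * (a + 1) + 1 = m * a + 1 + m by ring, sum_range_ceilDiv_add hm le_rfl, ih,
      Nat.choose_succ_succ' (a + 1), Nat.choose_one_right]
    ring

lemma sum_range_sub_eq_choose_two (a : ℕ) : ∑ x ∈ range a, (a - x) = (a + 1).choose 2 := by
  induction a with
  | zero => rfl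
  | succ a ih =>
    rw [sum_range_succ', Nat.choose_succ_succ', ← ih]
    simp only [Nat.reduceSubDiff, tsub_zero, Nat.choose_one_right]
    ring

theorem sum_range_min_ceilDiv (hm : 0 < m) {a r : ℕ} (hr : r ≤ m) :
    ∑ t ∈ range (a * (m + 1) + 1 + r), min (t ⌈/⌉ m) (a * (m + 1) + 1 + r - t) =
      (m + 1) * (a + 1).choose 2 + r * (a + 1) := by
  have hsplit : a * (m + 1) + 1 + r = m * a + 1 + r + a := by ring
  rw [hsplit, sum_range_add]
  have hceil : ∀ t ∈ range (m * a + 1 + r), min (t ⌈/⌉ m) (m * a + 1 + r + a - t) = t ⌈/⌉ m := by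
    intro t ht
    have ht' := mem_range.1 ht
    have hle : t ⌈/⌉ m ≤ a + 1 :=
      (ceilDiv_le_iff_le_mul hm).2 (by linarith [mul_add m a 1])
    exact min_eq_left (by omega)
  have htail : ∀ x ∈ range a,
      min ((m * a + 1 + r + x) ⌈/⌉ m) (m * a + 1 + r + a - (m * a + 1 + r + x)) = a - x := by
    intro x hx
    have hge : a + 1 ≤ (m * a + 1 + r + x) ⌈/⌉ m :=
      lt_of_not_ge fun (h : (m * a + 1 + r + x) ⌈/⌉ m ≤ a) => by linarith [(ceilDiv_le_iff_le_mul hm).1 h]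
    rw [min_eq_right (by omega)]
    omega
  rw [sum_congr rfl hceil, sum_congr rfl htail, sum_range_ceilDiv_add hm hr,
    sum_range_mul_add_one_ceilDiv hm, sum_range_sub_eq_choose_two]
  ring

end Sums

lemma ZMod.sum_val {n : ℕ} [NeZero n] {M : Type*} [AddCommMonoid M] (f : ℕ → M) :
    ∑ w : ZMod n, f w.val = ∑ t ∈ Finset.range n, f t :=
  Finset.sum_nbij' (fun w => w.val) (fun t => (t : ZMod n))
    (fun w _ => Finset.mem_range.2 (ZMod.val_lt w)) (fun _ _ => Finset.mem_univ _)
    (fun w _ => ZMod.natCast_zmod_val w) (fun _ ht => ZMod.val_cast_of_lt (Finset.mem_range.1 ht))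
    (fun _ _ => rfl)

theorem stmt8_general (m a r n : ℕ) (hm : 1 ≤ m) (hr : r ≤ m)
    (hn : n = a * (m + 1) + 1 + r) [NeZero n] (v : ZMod n) :
    (∑ u : ZMod n, ddist (circArc n (Set.Icc 1 m)) v u) =
      ((m + 1) * (a + 1).choose 2 + r * (a + 1) : ℕ) ∧
    (∑ u : ZMod n, ddist (circArc n (Set.Icc 1 m)) u v) =
      ((m + 1) * (a + 1).choose 2 + r * (a + 1) : ℕ) := by
  set f : ℕ → ℕ∞ := fun t => (min (t ⌈/⌉ m) (n - t) : ℕ)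
  have hsum : ∑ w : ZMod n, f w.val = ((m + 1) * (a + 1).choose 2 + r * (a + 1) : ℕ) := by
    rw [ZMod.sum_val f, ← Nat.cast_sum, hn, sum_range_min_ceilDiv hm hr]
  simp_rw [ddist_circArc_Icc hm]
  exact ⟨(Equiv.subRight v).sum_comp (fun w => f w.val) ▸ hsum,
    (Equiv.subLeft v).sum_comp (fun w => f w.val) ▸ hsum⟩

theorem stmt8 (m a r n : ℕ) (hm : 1 ≤ m) (ha : 1 ≤ a) (hr : r ≤ m)
    (hn : n = a * (m + 1) + 1 + r) [NeZero n] (v : ZMod n) :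
    (∑ u : ZMod n, ddist (circArc n (Set.Icc 1 m)) v u) =
      ((m + 1) * (a + 1).choose 2 + r * (a + 1) : ℕ) ∧
    (∑ u : ZMod n, ddist (circArc n (Set.Icc 1 m)) u v) =
      ((m + 1) * (a + 1).choose 2 + r * (a + 1) : ℕ) :=
  stmt8_general m a r n hm hr hn v
end

section
/- For every positive integer m, with a = 6m − 1, the identity Σ_{s=1}^{a−1} s·⌈(m+1)(a−s)/m⌉ = C(a+1, 3) + Σ_{k=1}^{6} C(km − 1, 2) holds, where ⌈·⌉ is the ceiling function and C(·,·) the binomial coefficient. -/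
/-!
Substituting t = a - s turns the summand into (a - t) * (t + ⌈t/m⌉). Both t and ⌈t/m⌉ count
thresholds below t (namely k < t for k < a, and k * m < t for k < n when a = n * m - 1), so
exchanging the order of summation leaves, for each threshold c, the sum of a - t over c < t < a,
which is C(a - c, 2). The thresholds k < a then give C(a + 1, 3) by the hockey-stick identity.
-/

open Finset

theorem Nat.sum_range_choose_sub (a r : ℕ) :
    ∑ t ∈ range a, (a - t).choose (r + 1) = (a + 1).choose (r + 2) := by
  induction a with
  | zero => exact (Nat.choose_eq_zero_of_lt (by omega)).symm
  | succ a ih =>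
    rw [sum_range_succ', Nat.sub_zero, Nat.choose_succ_succ' (a + 1)]
    simp only [Nat.add_sub_add_right, ih]
    ring

theorem sum_range_ite_lt_sub (a c : ℕ) :
    ∑ t ∈ range a, (if c < t then a - t else 0) = (a - c).choose 2 := by
  induction a generalizing c with
  | zero => simp
  | succ a ih =>
    rw [sum_range_succ']
    simp only [Nat.not_lt_zero, if_false, add_zero, Nat.add_sub_add_right]
    cases c with
    | zero => simpa using Nat.sum_range_choose_sub a 0
    | succ c => simpa using ih c

theorem sum_range_sub_mul_card_filter_lt {ι : Type*} (a : ℕ) (K : Finset ι) (g : ι → ℕ) :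
    ∑ t ∈ range a, (a - t) * #{k ∈ K | g k < t} = ∑ k ∈ K, (a - g k).choose 2 := by
  simp only [card_filter, mul_sum, mul_ite, mul_one, mul_zero]
  rw [sum_comm]
  exact sum_congr rfl fun k _ => sum_range_ite_lt_sub a (g k)

theorem card_filter_range_lt {a t : ℕ} (ht : t ≤ a) : #{k ∈ range a | k < t} = t := by
  rw [show {k ∈ range a | k < t} = range t by ext; simp only [mem_filter, mem_range]; omega, card_range]

theorem card_filter_range_mul_lt {n m t : ℕ} (hm : 0 < m) (ht : t ≤ n * m) :
    #{k ∈ range n | k * m < t} = t ⌈/⌉ m := by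
  suffices {k ∈ range n | k * m < t} = range (t ⌈/⌉ m) by rw [this, card_range]
  ext k
  simp only [mem_filter, mem_range, ← not_le, ceilDiv_le_iff_le_mul hm, mul_comm m]
  exact ⟨fun h => h.2, fun h => ⟨fun hnk => h (ht.trans (Nat.mul_le_mul_right m hnk)), h⟩⟩

theorem succ_mul_add_pred_div {m : ℕ} (hm : 0 < m) (t : ℕ) :
    ((m + 1) * t + (m - 1)) / m = t + t ⌈/⌉ m := by
  obtain ⟨m, rfl⟩ : ∃ k, m = k + 1 := ⟨m - 1, by omega⟩
  rw [Nat.ceilDiv_eq_add_pred_div, show (m + 1 + 1) * t + (m + 1 - 1) = t + m + t * (m + 1) by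
    simp only [Nat.add_sub_cancel]; ring, Nat.add_mul_div_right _ _ hm,
    show t + (m + 1) - 1 = t + m by omega, add_comm]

theorem sum_Icc_mul_sub {a : ℕ} (f : ℕ → ℕ) (hf : f 0 = 0) :
    ∑ s ∈ Icc 1 (a - 1), s * f (a - s) = ∑ t ∈ range a, (a - t) * f t := by
  calc ∑ s ∈ Icc 1 (a - 1), s * f (a - s) = ∑ t ∈ Icc 1 (a - 1), (a - t) * f t :=
        sum_nbij' (a - ·) (a - ·) (by intro s; simp only [mem_Icc]; omega)
          (by intro s; simp only [mem_Icc]; omega) (by intro s; simp only [mem_Icc]; omega)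
          (by intro s; simp only [mem_Icc]; omega)
          (fun s hs => by rw [Nat.sub_sub_self (by simp only [mem_Icc] at hs; omega)])
    _ = ∑ t ∈ range a, (a - t) * f t := by
        refine sum_subset (fun t => by simp only [mem_Icc, mem_range]; omega) fun t ht hnot => ?_
        obtain rfl : t = 0 := by simp only [mem_range, mem_Icc] at ht hnot; omega
        rw [hf, mul_zero]

theorem sum_range_choose_mul_sub (n m : ℕ) :
    ∑ k ∈ range n, (n * m - 1 - k * m).choose 2 = ∑ k ∈ Icc 1 n, (k * m - 1).choose 2 :=
  sum_nbij' (n - ·) (n - ·) (by intro k; simp only [mem_range, mem_Icc]; omega)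
    (by intro k; simp only [mem_range, mem_Icc]; omega) (by intro k; simp only [mem_range]; omega)
    (by intro k; simp only [mem_Icc]; omega) fun k _ => by
      rw [Nat.sub_mul, Nat.sub_sub, Nat.sub_sub, Nat.add_comm]

theorem sum_mul_ceil_succ_mul_div (n m : ℕ) (hm : 0 < m) :
    (∑ s ∈ Icc 1 (n * m - 1 - 1), s * (((m + 1) * (n * m - 1 - s) + (m - 1)) / m)) =
      (n * m - 1 + 1).choose 3 + ∑ k ∈ Icc 1 n, (k * m - 1).choose 2 := by
  set a := n * m - 1
  have hsplit : ∀ t ≤ a,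
      ((m + 1) * t + (m - 1)) / m = #{k ∈ range a | k < t} + #{k ∈ range n | k * m < t} :=
    fun t ht => by
      rw [succ_mul_add_pred_div hm, card_filter_range_lt ht, card_filter_range_mul_lt hm (by omega)]
  calc (∑ s ∈ Icc 1 (a - 1), s * (((m + 1) * (a - s) + (m - 1)) / m))
      = ∑ s ∈ Icc 1 (a - 1),
          s * (#{k ∈ range a | k < a - s} + #{k ∈ range n | k * m < a - s}) :=
        sum_congr rfl fun s _ => by rw [hsplit _ (Nat.sub_le a s)]
    _ = ∑ t ∈ range a, (a - t) * (#{k ∈ range a | k < t} + #{k ∈ range n | k * m < t}) :=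
        sum_Icc_mul_sub (fun t => #{k ∈ range a | k < t} + #{k ∈ range n | k * m < t}) (by simp)
    _ = ∑ k ∈ range a, (a - k).choose 2 + ∑ k ∈ range n, (a - k * m).choose 2 := by
        simp only [mul_add, sum_add_distrib, sum_range_sub_mul_card_filter_lt]
    _ = (a + 1).choose 3 + ∑ k ∈ Icc 1 n, (k * m - 1).choose 2 := by
        rw [Nat.sum_range_choose_sub a 1, sum_range_choose_mul_sub]

theorem stmt13 (m : ℕ) (hm : 0 < m) :
    (∑ s ∈ Finset.Icc 1 (6 * m - 1 - 1), s * (((m + 1) * (6 * m - 1 - s) + (m - 1)) / m)) =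
      (6 * m - 1 + 1).choose 3 + ∑ k ∈ Finset.Icc 1 6, (k * m - 1).choose 2 :=
  sum_mul_ceil_succ_mul_div 6 m hm
end

section
/- For every positive integer m and a = 6m − 1, the identity Σ_{s=1}^{a−1} s·⌈(a−s)/m⌉ = Σ_{k=1}^{6} C(km − 1, 2) holds. -/
/-!
Write `⌈(a - s)/m⌉` as the number of `i < 6` with `i m < a - s` and swap the two sums: for fixed
`i` the weights `s` run over `1, …, a - i m - 1`, summing to `C(a - i m, 2) = C((6 - i) m - 1, 2)`.
-/

open Finset

lemma Nat.lt_add_pred_div_iff {m : ℕ} (hm : 0 < m) (i n : ℕ) :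
    i < (n + (m - 1)) / m ↔ i * m < n := by
  rw [← Nat.add_one_le_iff, Nat.le_div_iff_mul_le hm, Nat.add_one_mul]
  omega

lemma Nat.add_pred_div_eq_card_filter {m n N : ℕ} (hm : 0 < m) (hn : n ≤ N * m) :
    (n + (m - 1)) / m = #{i ∈ range N | i * m < n} := by
  have hle : (n + (m - 1)) / m ≤ N := by
    by_contra! h
    exact ((Nat.lt_add_pred_div_iff hm N n).1 h).not_ge hn
  have hfilter : {i ∈ range N | i * m < n} = range ((n + (m - 1)) / m) := by
    ext i
    simp only [mem_filter, mem_range, ← Nat.lt_add_pred_div_iff hm]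
    omega
  rw [hfilter, card_range]

lemma sum_Icc_one_id_eq_choose_two (n : ℕ) : ∑ s ∈ Icc 1 (n - 1), s = n.choose 2 := by
  rw [Nat.choose_two_right, ← sum_range_id]
  refine sum_subset (fun s hs => ?_) (fun s hs hs' => ?_)
  · simp only [mem_Icc, mem_range] at hs ⊢
    omega
  · simp only [mem_Icc, mem_range] at hs hs'
    omega

theorem sum_mul_ceil_div_eq_sum_choose_two {a m N : ℕ} (hm : 0 < m) (ha : a ≤ N * m + 1) :
    ∑ s ∈ Icc 1 (a - 1), s * ((a - s + (m - 1)) / m) = ∑ i ∈ range N, (a - i * m).choose 2 :=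
  calc ∑ s ∈ Icc 1 (a - 1), s * ((a - s + (m - 1)) / m)
      = ∑ s ∈ Icc 1 (a - 1), ∑ i ∈ range N, if i * m < a - s then s else 0 := by
        refine sum_congr rfl fun s hs => ?_
        rw [mem_Icc] at hs
        rw [Nat.add_pred_div_eq_card_filter hm (by omega : a - s ≤ N * m), card_filter, mul_sum]
        simp only [mul_ite, mul_one, mul_zero]
    _ = ∑ i ∈ range N, ∑ s ∈ Icc 1 (a - i * m - 1), s := by
        rw [sum_comm]
        refine sum_congr rfl fun i _ => ?_
        rw [← sum_filter]
        congr 1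
        ext s
        simp only [mem_filter, mem_Icc]
        omega
    _ = ∑ i ∈ range N, (a - i * m).choose 2 := by
        simp only [sum_Icc_one_id_eq_choose_two]

theorem stmt14 (m : ℕ) (hm : 0 < m) :
    (∑ s ∈ Finset.Icc 1 (6 * m - 1 - 1), s * ((6 * m - 1 - s + (m - 1)) / m)) =
      ∑ k ∈ Finset.Icc 1 6, (k * m - 1).choose 2 := by
  rw [sum_mul_ceil_div_eq_sum_choose_two (N := 6) hm (by omega)]
  refine sum_nbij' (fun i => 6 - i) (fun k => 6 - k) ?_ ?_ ?_ ?_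
    fun i _ => by rw [Nat.sub_mul, Nat.sub_right_comm]
  all_goals intro i hi; simp only [mem_range, mem_Icc] at hi ⊢; omega
end

section
/- The undirected cycle C₁₁ on 11 vertices is a Šoltés graph: for every vertex v, the total distance of C₁₁ equals the total distance of the path on 10 vertices obtained by deleting v, i.e., W(C₁₁) = W(C₁₁ − v). -/
open SimpleGraph
open scoped Fin.CommRing Fin.NatCast

/-- Wiener index of a graph: sum of distances over unordered pairs of vertices
(the diagonal pairs contribute `0`). -/
noncomputable def wienerG {V : Type*} [Fintype V] [DecidableEq V] (G : SimpleGraph V) : ℕ :=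
  ∑ p ∈ (Finset.univ : Finset V).sym2, Sym2.lift ⟨fun u w => G.dist u w,
    fun u w => G.dist_comm⟩ p

/-- claimed distance function on the cycle `C₁₁`. -/
private def dc (u w : Fin 11) : ℕ := min (w - u).val (u - w).val

/-- claimed distance function on the path obtained by deleting a vertex, after
translating so the deleted vertex is `0`. -/
private def dd (a b : Fin 11) : ℕ := max a.val b.val - min a.val b.val

private lemma dc_comm (u w : Fin 11) : dc u w = dc w u := by
  simp [dc, Nat.min_comm]

private lemma dd_comm (a b : Fin 11) : dd a b = dd b a := by
  simp [dd, Nat.max_comm, Nat.min_comm]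

/-- generic lower bound on walk lengths from a "potential" function. -/
private lemma walk_lb {V : Type*} {G : SimpleGraph V} (d : V → V → ℕ)
    (h0 : ∀ x, d x x = 0)
    (hstep : ∀ a b c : V, G.Adj a b → d a c ≤ d b c + 1) :
    ∀ {u v : V} (p : G.Walk u v), d u v ≤ p.length := by
  intro u v p
  induction p with
  | nil => simp [h0]
  | @cons a b c h q ih =>
      have := hstep a b c h
      simp only [Walk.length_cons]
      omega

private lemma cycle_step (k : ℕ) (u : Fin 11) : (cycleGraph 11).dist u (u + k) ≤ k := by
  induction k with
  | zero => simp
  | succ k ih =>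
      have hadj : (cycleGraph 11).Adj (u + k) (u + (k + 1 : ℕ)) := by
        rw [cycleGraph_adj]
        right
        push_cast
        ring_nf
      have h1 : (cycleGraph 11).dist (u + k) (u + (k + 1 : ℕ)) = 1 :=
        dist_eq_one_iff_adj.mpr hadj
      calc (cycleGraph 11).dist u (u + (k + 1 : ℕ))
          ≤ (cycleGraph 11).dist u (u + k) + (cycleGraph 11).dist (u + k) (u + (k + 1 : ℕ)) :=
            cycleGraph_connected.dist_triangle
        _ ≤ k + 1 := by omega

private lemma cycle_dist (u w : Fin 11) : (cycleGraph 11).dist u w = dc u w := by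
  apply le_antisymm
  · apply le_min
    · have := cycle_step (w - u).val u
      rwa [Fin.cast_val_eq_self, add_sub_cancel] at this
    · have := cycle_step (u - w).val w
      rw [Fin.cast_val_eq_self, add_sub_cancel] at this
      rwa [dist_comm]
  · obtain ⟨p, hp⟩ := cycleGraph_connected.exists_walk_length_eq_dist u w
    rw [← hp]
    refine walk_lb dc (by intro x; simp [dc]) ?_ p
    intro a b c hab
    rw [cycleGraph_adj] at hab
    revert hab
    revert a b c
    decide

private lemma sub_one_val {a : Fin 11} (h : a.val ≠ 0) : (a - 1).val = a.val - 1 := by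
  have := a.is_lt
  rw [Fin.sub_def]
  simp
  omega

private lemma H_walk {v : Fin 11} : ∀ (n : ℕ) (x y : {x : Fin 11 | x ≠ v}),
    (y.val - v).val = (x.val - v).val + n →
    ∃ p : ((cycleGraph 11).induce {x | x ≠ v}).Walk x y, p.length ≤ n := by
  intro n
  induction n with
  | zero =>
      intro x y h
      have hxy : x = y := by
        have hxy : x.val - v = y.val - v := Fin.ext (by omega)
        have : x.val = y.val := by
          have := congrArg (· + v) hxy
          simpa using this
        exact Subtype.ext this
      exact hxy ▸ ⟨Walk.nil, by simp⟩
  | succ n ih =>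
      intro x y h
      have hx0 : (x.val - v).val ≠ 0 := by
        have h : x.val - v ≠ 0 := sub_ne_zero.mpr x.prop
        intro hv
        exact h (Fin.ext (by simp [hv]))
      set c : Fin 11 := y.val - 1 with hc
      have hcv : (c - v) = (y.val - v) - 1 := by rw [hc]; ring
      have hyv0 : (y.val - v).val ≠ 0 := by omega
      have hcval : (c - v).val = (x.val - v).val + n := by
        rw [hcv, sub_one_val hyv0]; omega
      have hcne : c ∈ {x : Fin 11 | x ≠ v} := by
        intro hcev
        rw [hcev, sub_self] at hcval
        simp at hcval
        omega
      have hadj : ((cycleGraph 11).induce {x | x ≠ v}).Adj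
          (⟨c, hcne⟩ : {x : Fin 11 | x ≠ v}) y := by
        show (cycleGraph 11).Adj c y.val
        rw [cycleGraph_adj']
        right
        rw [hc]
        simp
      obtain ⟨p, hp⟩ := ih x ⟨c, hcne⟩ hcval
      exact ⟨p.concat hadj, by simpa using Nat.succ_le_succ hp⟩

private lemma H_lb {v : Fin 11} {x y : {x : Fin 11 | x ≠ v}}
    (p : ((cycleGraph 11).induce {x | x ≠ v}).Walk x y) :
    dd (x.val - v) (y.val - v) ≤ p.length := by
  refine walk_lb (fun a b => dd (a.val - v) (b.val - v)) (by intro a; simp [dd]) ?_ p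
  intro a b c hab
  have hadj : (cycleGraph 11).Adj a.val b.val := hab
  rw [cycleGraph_adj'] at hadj
  have e1 : (a.val - v) - (b.val - v) = a.val - b.val := by ring
  have e2 : (b.val - v) - (a.val - v) = b.val - a.val := by ring
  have hab' : ((a.val - v) - (b.val - v)).val = 1 ∨ ((b.val - v) - (a.val - v)).val = 1 := by
    rw [e1, e2]; exact hadj
  have key : ∀ A B C : Fin 11, A ≠ 0 → B ≠ 0 → C ≠ 0 →
      ((A - B).val = 1 ∨ (B - A).val = 1) → dd A C ≤ dd B C + 1 := by decide
  exact key _ _ _ (sub_ne_zero.mpr a.prop) (sub_ne_zero.mpr b.prop)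
    (sub_ne_zero.mpr c.prop) hab'

private lemma H_dist {v : Fin 11} (x y : {x : Fin 11 | x ≠ v}) :
    ((cycleGraph 11).induce {x | x ≠ v}).dist x y = dd (x.val - v) (y.val - v) := by
  have key : ∀ x y : {x : Fin 11 | x ≠ v}, (x.val - v).val ≤ (y.val - v).val →
      ((cycleGraph 11).induce {x | x ≠ v}).dist x y = dd (x.val - v) (y.val - v) := by
    intro x y hle
    obtain ⟨p, hp⟩ := H_walk ((y.val - v).val - (x.val - v).val) x y (by omega)
    apply le_antisymm
    · calc ((cycleGraph 11).induce {x | x ≠ v}).dist x y ≤ p.length := dist_le p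
        _ ≤ (y.val - v).val - (x.val - v).val := hp
        _ = dd (x.val - v) (y.val - v) := by simp [dd]; omega
    · obtain ⟨q, hq⟩ := Reachable.exists_walk_length_eq_dist ⟨p⟩
      rw [← hq]
      exact H_lb q
  rcases le_total (x.val - v).val (y.val - v).val with hle | hle
  · exact key x y hle
  · rw [dist_comm, dd_comm]
    exact key y x hle

theorem stmt15 (v : Fin 11) :
    wienerG (SimpleGraph.cycleGraph 11) =
      wienerG ((SimpleGraph.cycleGraph 11).induce {x | x ≠ v}) := by
  have h1 : wienerG (SimpleGraph.cycleGraph 11) = 165 := by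
    unfold wienerG
    have : ∀ p ∈ (Finset.univ : Finset (Fin 11)).sym2,
        Sym2.lift ⟨fun u w => (cycleGraph 11).dist u w, fun u w => (cycleGraph 11).dist_comm⟩ p
          = Sym2.lift ⟨dc, dc_comm⟩ p := by
      intro p _
      induction p using Sym2.ind with
      | _ u w => simp [cycle_dist]
    rw [Finset.sum_congr rfl this]
    decide
  have h2 : wienerG ((SimpleGraph.cycleGraph 11).induce {x | x ≠ v}) = 165 := by
    unfold wienerG
    have hmain : ∑ p ∈ (Finset.univ : Finset {x : Fin 11 | x ≠ v}).sym2,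
        Sym2.lift ⟨fun u w => ((cycleGraph 11).induce {x | x ≠ v}).dist u w,
          fun u w => dist_comm⟩ p
        = ∑ p ∈ ((Finset.univ : Finset (Fin 11)).erase 0).sym2,
            Sym2.lift ⟨dd, dd_comm⟩ p := by
      have hv1 : (v + 1 : Fin 11) ≠ v := by
        intro h
        have : (1 : Fin 11) = 0 := by
          have := congrArg (· - v) h
          simpa [add_comm] using this
        simp at this
      set e : {x : Fin 11 | x ≠ v} → Fin 11 := fun x => x.val - v with he
      set g : Fin 11 → {x : Fin 11 | x ≠ v} := fun a =>
        if h : a = 0 then ⟨v + 1, hv1⟩ else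
          ⟨a + v, fun hc => h (by simpa using congrArg (· - v) hc)⟩ with hg
      have hge : ∀ x : {x : Fin 11 | x ≠ v}, g (e x) = x := by
        intro x
        have hne : e x ≠ 0 := sub_ne_zero.mpr x.prop
        rw [hg]
        simp only [dif_neg hne]
        exact Subtype.ext (by simp [he])
      have heg : ∀ a : Fin 11, a ≠ 0 → e (g a) = a := by
        intro a ha
        rw [hg]
        simp only [dif_neg ha]
        rw [he]
        simp
      refine Finset.sum_nbij' (fun p => p.map e) (fun p => p.map g) ?_ ?_ ?_ ?_ ?_
      · intro p _
        induction p using Sym2.ind with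
        | _ x y =>
            simp only [Sym2.map_pair_eq, Finset.mk_mem_sym2_iff]
            refine ⟨Finset.mem_erase.mpr ⟨?_, Finset.mem_univ _⟩,
              Finset.mem_erase.mpr ⟨?_, Finset.mem_univ _⟩⟩
            · exact sub_ne_zero.mpr x.prop
            · exact sub_ne_zero.mpr y.prop
      · intro p _
        induction p using Sym2.ind with
        | _ a b => simp
      · intro p _
        induction p using Sym2.ind with
        | _ x y => simp only [Sym2.map_pair_eq, hge]
      · intro p hp
        induction p using Sym2.ind with
        | _ a b =>
            rw [Finset.mk_mem_sym2_iff] at hp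
            simp only [Finset.mem_erase] at hp
            simp only [Sym2.map_pair_eq, heg a hp.1.1, heg b hp.2.1]
      · intro p _
        induction p using Sym2.ind with
        | _ x y =>
            simp only [Sym2.map_pair_eq, Sym2.lift_mk]
            exact H_dist x y
    rw [hmain]
    decide
  rw [h1, h2]
end

section
/- Let D be a finite strongly connected digraph on n vertices with diameter at most 2, at least 2n arcs, and such that D − v is strongly connected for every vertex v. Then there exists a vertex v such that the number of ordered pairs (u,u') of distinct vertices with u,u' ≠ v, d_D(u,u') = 2, and d_{D−v}(u,u') > 2 is at most n − 3. -/
lemma ddist_le_of_walk {V : Type*} {A : V → V → Prop} {u v : V} {n : ℕ}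
    (h : DWalk A n u v) : ddist A u v ≤ (n : ℕ∞) :=
  sInf_le ⟨n, rfl, h⟩

lemma exists_mid {V : Type*} {A : V → V → Prop} {u v : V} (h : ddist A u v = 2) :
    ∃ w, A u w ∧ A w v := by
  by_contra hc
  push_neg at hc
  have h3 : (3 : ℕ∞) ≤ ddist A u v := by
    apply le_sInf
    rintro k ⟨m, rfl, hw⟩
    match m, hw with
    | 0, hw =>
      exfalso
      have h0 : ddist A u v ≤ ((0 : ℕ) : ℕ∞) := ddist_le_of_walk hw
      rw [h] at h0
      norm_num at h0
    | 1, hw =>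
      exfalso
      have h1 : ddist A u v ≤ ((1 : ℕ) : ℕ∞) := ddist_le_of_walk hw
      rw [h] at h1
      norm_num at h1
    | 2, hw =>
      exfalso
      obtain ⟨w, huw, w', hww', hw'⟩ := hw
      exact hc w huw (hw' ▸ hww')
    | (m+3), hw =>
      exact_mod_cast Nat.le_add_left 3 m
  rw [h] at h3
  exact absurd h3 (by norm_num)

lemma no_arc_of_ddist_two {V : Type*} {A : V → V → Prop} {u v : V}
    (h : ddist A u v = 2) (ha : A u v) : False := by
  have h1 : ddist A u v ≤ ((1 : ℕ) : ℕ∞) := ddist_le_of_walk ⟨v, ha, rfl⟩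
  rw [h] at h1
  norm_num at h1

theorem stmt19 {V : Type*} [Fintype V] [DecidableEq V] (A : V → V → Prop)
    (hirr : Irreflexive A)
    (hn : 4 ≤ Fintype.card V)
    (hconn : StrongConn A)
    (hdiam : ∀ u u' : V, u ≠ u' → ddist A u u' ≤ 2)
    (harcs : 2 * Fintype.card V ≤ Nat.card {p : V × V // A p.1 p.2})
    (hdel : ∀ v : V, StrongConn (delRel A v)) :
    ∃ v : V,
      Nat.card {p : {x : V // x ≠ v} × {x : V // x ≠ v} //
        p.1 ≠ p.2 ∧ ddist A p.1.1 p.2.1 = 2 ∧ 2 < ddist (delRel A v) p.1 p.2} ≤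
      Fintype.card V - 3 := by
  classical
  set n := Fintype.card V with hndef
  by_contra hcon
  push_neg at hcon
  set Bad : V → Type _ := fun v =>
    {p : {x : V // x ≠ v} × {x : V // x ≠ v} //
      p.1 ≠ p.2 ∧ ddist A p.1.1 p.2.1 = 2 ∧ 2 < ddist (delRel A v) p.1 p.2} with hBad
  have hlb : ∀ v : V, n - 2 ≤ Nat.card (Bad v) := by
    intro v
    have h := hcon v
    change n - 3 < Nat.card (Bad v) at h
    omega
  set T := {p : V × V // p.1 ≠ p.2 ∧ ddist A p.1 p.2 = 2} with hTdef
  -- injection from Σ v, Bad v into T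
  have hinj1 : Nat.card (Σ v : V, Bad v) ≤ Nat.card T := by
    apply Nat.card_le_card_of_injective
      (f := fun x : Σ v : V, Bad v =>
        (⟨(x.2.1.1.1, x.2.1.2.1),
          fun h => x.2.2.1 (Subtype.ext h),
          x.2.2.2.1⟩ : T))
    rintro ⟨v, ⟨⟨u1, u2⟩, hne, hd2, hgt⟩⟩ ⟨v', ⟨⟨u1', u2'⟩, hne', hd2', hgt'⟩⟩ heq
    simp only [Subtype.mk.injEq, Prod.mk.injEq] at heq
    obtain ⟨h1, h2⟩ := heq
    -- unique midpoints
    have hmid : ∀ v0 : V, ∀ (a b : {x : V // x ≠ v0}),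
        ddist A a.1 b.1 = 2 → 2 < ddist (delRel A v0) a b →
        ∀ w, A a.1 w → A w b.1 → w = v0 := by
      intro v0 a b hd hg w haw hwb
      by_contra hwv
      have hwalk : DWalk (delRel A v0) 2 a b :=
        ⟨⟨w, hwv⟩, haw, b, hwb, rfl⟩
      have hle := ddist_le_of_walk hwalk
      rw [show ((2:ℕ):ℕ∞) = 2 from rfl] at hle
      exact absurd hg (not_lt.mpr hle)
    obtain ⟨w, hw1, hw2⟩ := exists_mid hd2
    have hwv : w = v := hmid v u1 u2 hd2 hgt w hw1 hw2
    have hwv' : w = v' := hmid v' u1' u2' hd2' hgt' w (h1 ▸ hw1) (h2 ▸ hw2)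
    have hvv : v = v' := hwv ▸ hwv'
    subst hvv
    refine congrArg (Sigma.mk v) (Subtype.ext ?_)
    exact Prod.ext_iff.mpr ⟨Subtype.ext h1, Subtype.ext h2⟩
  -- card of sigma is the sum
  haveI : ∀ v : V, Fintype (Bad v) := fun v => Fintype.ofFinite _
  have hsig : Nat.card (Σ v : V, Bad v) = ∑ v : V, Nat.card (Bad v) := by
    simp [Nat.card_eq_fintype_card, Fintype.card_sigma]
  -- injection from T ⊕ arcs into off-diagonal pairs
  have hinj2 : Nat.card T + Nat.card {p : V × V // A p.1 p.2}
      ≤ Nat.card {p : V × V // p.1 ≠ p.2} := by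
    rw [← Nat.card_sum]
    apply Nat.card_le_card_of_injective
      (f := fun x : T ⊕ {p : V × V // A p.1 p.2} =>
        match x with
        | Sum.inl t => (⟨t.1, t.2.1⟩ : {p : V × V // p.1 ≠ p.2})
        | Sum.inr a => (⟨a.1, fun h => hirr a.1.2 (by
            have : a.1 = (a.1.1, a.1.2) := rfl
            have h2 : a.1.1 = a.1.2 := h
            exact h2 ▸ a.2)⟩ : {p : V × V // p.1 ≠ p.2}))
    rintro (t | a) (t' | a') h <;> simp only [Subtype.mk.injEq] at h
    · exact congrArg Sum.inl (Subtype.ext h)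
    · exact absurd (h ▸ a'.2) (fun ha => no_arc_of_ddist_two t.2.2 ha)
    · exact absurd (h ▸ a.2) (fun ha => no_arc_of_ddist_two t'.2.2 ha)
    · exact congrArg Sum.inr (Subtype.ext h)
  -- card of off-diagonal pairs
  have hoff : Nat.card {p : V × V // p.1 ≠ p.2} = n * n - n := by
    have e : V ≃ {p : V × V // p.1 = p.2} :=
      ⟨fun v => ⟨(v, v), rfl⟩, fun p => p.1.1,
       fun v => rfl,
       fun p => Subtype.ext (by
         obtain ⟨⟨a, b⟩, hab⟩ := p
         have hab' : a = b := hab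
         subst hab'
         rfl)⟩
    have h1 : Nat.card {p : V × V // p.1 = p.2} = n := by
      rw [Nat.card_eq_of_equiv_fin (e.symm.trans (Fintype.equivFin V))]
    have h2 : Nat.card {p : V × V // p.1 = p.2} + Nat.card {p : V × V // p.1 ≠ p.2}
        = n * n := by
      rw [← Nat.card_sum, Nat.card_eq_of_equiv_fin
        ((Equiv.sumCompl (fun p : V × V => p.1 = p.2)).trans
          (Fintype.equivFin (V × V)))]
      simp [Fintype.card_prod, hndef]
    omega
  -- assemble
  have hsum : n * (n - 2) ≤ ∑ v : V, Nat.card (Bad v) := by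
    calc n * (n - 2) = ∑ _v : V, (n - 2) := by
          rw [Finset.sum_const]; simp [mul_comm, hndef]
    _ ≤ ∑ v : V, Nat.card (Bad v) := Finset.sum_le_sum (fun v _ => hlb v)
  have h5 : ∑ v : V, Nat.card (Bad v) ≤ Nat.card T := hsig ▸ hinj1
  rw [hoff] at hinj2
  have e1 : n * (n - 2) + 2 * n = n * n := by
    have h2 : n - 2 + 2 = n := by omega
    calc n * (n - 2) + 2 * n = n * ((n - 2) + 2) := by ring
    _ = n * n := by rw [h2]
  obtain ⟨s, hs⟩ : ∃ s : ℕ, n * n = s := ⟨_, rfl⟩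
  obtain ⟨t, ht⟩ : ∃ t : ℕ, n * (n - 2) = t := ⟨_, rfl⟩
  rw [hs] at e1 hinj2
  rw [ht] at e1 hsum
  omega
end
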